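/- (Sufficiency with only binary predictors, Corollary 4.) Let P_y(h) := exp(vech(hhᵀ)ᵀ(τ₀ + τ f_y)) / G_y for h ∈ {0,1}^q, where G_y := Σ_{h' ∈ {0,1}^q} exp(vech(h'h'ᵀ)ᵀ(τ₀ + τ f_y)). Define s(h) := (h; J_q vech(hhᵀ)) ∈ ℝ^{q+k_q} and let α₂ be the (q+k_q) × r matrix with row-blocks (L_q τ; J_q τ). If h₁, h₂ ∈ {0,1}^q satisfy α₂ᵀ s(h₁) = α₂ᵀ s(h₂), then P_y(h₁) · P_{y'}(h₂) = P_y(h₂) · P_{y'}(h₁) for all y, y' ∈ 𝒴; i.e., the Ising likelihood ratio between any two values of y depends on h only through α₂ᵀ s(h). -/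
import Mathlib


open Matrix

namespace Stmt5

/-- On-or-below-diagonal positions of a `q × q` matrix; cardinality `q(q+1)/2`. -/
abbrev SymIdx (q : ℕ) := {ij : Fin q × Fin q // ij.2 ≤ ij.1}

/-- Strictly-below-diagonal positions; cardinality `k_q = q(q-1)/2`. -/
abbrev StrictIdx (q : ℕ) := {ij : Fin q × Fin q // ij.2 < ij.1}

/-- Half-vectorization of a square matrix. -/
def vech {q : ℕ} (G : Matrix (Fin q) (Fin q) ℝ) : SymIdx q → ℝ :=
  fun ij => G ij.1.1 ij.1.2

/-- The matrix `L_q`: `L_q *ᵥ vech G` is the diagonal of `G`. -/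
def Lmat (q : ℕ) : Matrix (Fin q) (SymIdx q) ℝ :=
  fun j kl => if kl.1 = (j, j) then 1 else 0

/-- The matrix `J_q`: `J_q *ᵥ vech G` lists the strictly-below-diagonal entries of `G`. -/
def Jmat (q : ℕ) : Matrix (StrictIdx q) (SymIdx q) ℝ :=
  fun ij kl => if ij.1 = kl.1 then 1 else 0

/-- The `{0,1}`-vector associated with a Boolean vector. -/
def bvec {q : ℕ} (s : Fin q → Bool) : Fin q → ℝ := fun i => if s i then 1 else 0

/-- Ising normalizing constant `G_y`. -/
noncomputable def Gfun {q r : ℕ} (τ0 : SymIdx q → ℝ) (τ : Matrix (SymIdx q) (Fin r) ℝ)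
    (fy : Fin r → ℝ) : ℝ :=
  ∑ s : Fin q → Bool, Real.exp (vech (vecMulVec (bvec s) (bvec s)) ⬝ᵥ (τ0 + τ *ᵥ fy))

/-- Ising probability `P_y(h) = exp(vech(hhᵀ)ᵀ(τ₀ + τ f_y)) / G_y`. -/
noncomputable def Pising {q r : ℕ} (τ0 : SymIdx q → ℝ) (τ : Matrix (SymIdx q) (Fin r) ℝ)
    (fy : Fin r → ℝ) (h : Fin q → ℝ) : ℝ :=
  Real.exp (vech (vecMulVec h h) ⬝ᵥ (τ0 + τ *ᵥ fy)) / Gfun τ0 τ fy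

/-- The statistic `s(h) = (h; J_q vech(hhᵀ)) ∈ ℝ^{q + k_q}`. -/
noncomputable def sstat {q : ℕ} (h : Fin q → ℝ) : Fin q ⊕ StrictIdx q → ℝ :=
  Sum.elim h (Jmat q *ᵥ vech (vecMulVec h h))

/-- The matrix `α₂` with row-blocks `(L_q τ; J_q τ)`. -/
noncomputable def alpha2 {q r : ℕ} (τ : Matrix (SymIdx q) (Fin r) ℝ) :
    Matrix (Fin q ⊕ StrictIdx q) (Fin r) ℝ :=
  Matrix.of <| Sum.elim (fun i k => (Lmat q * τ) i k) (fun i k => (Jmat q * τ) i k)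

lemma Lmul_apply {q r : ℕ} (τ : Matrix (SymIdx q) (Fin r) ℝ) (j : Fin q) (k : Fin r) :
    (Lmat q * τ) j k = τ ⟨(j, j), le_refl j⟩ k := by
  rw [Matrix.mul_apply]
  rw [Finset.sum_eq_single (⟨(j, j), le_refl j⟩ : SymIdx q)]
  · simp [Lmat]
  · intro b _ hb
    have : b.1 ≠ (j, j) := fun h => hb (Subtype.ext h)
    simp [Lmat, this]
  · simp

lemma Jmul_apply {q r : ℕ} (τ : Matrix (SymIdx q) (Fin r) ℝ) (ij : StrictIdx q) (k : Fin r) :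
    (Jmat q * τ) ij k = τ ⟨ij.1, le_of_lt ij.2⟩ k := by
  rw [Matrix.mul_apply]
  rw [Finset.sum_eq_single (⟨ij.1, le_of_lt ij.2⟩ : SymIdx q)]
  · simp [Jmat]
  · intro b _ hb
    have : ij.1 ≠ b.1 := fun h => hb (by apply Subtype.ext; exact h.symm)
    simp [Jmat, this]
  · simp

lemma JmulVec_apply {q : ℕ} (v : SymIdx q → ℝ) (ij : StrictIdx q) :
    (Jmat q *ᵥ v) ij = v ⟨ij.1, le_of_lt ij.2⟩ := by
  rw [Matrix.mulVec, dotProduct]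
  rw [Finset.sum_eq_single (⟨ij.1, le_of_lt ij.2⟩ : SymIdx q)]
  · simp [Jmat]
  · intro b _ hb
    have : ij.1 ≠ b.1 := fun h => hb (by apply Subtype.ext; exact h.symm)
    simp [Jmat, this]
  · simp

/-- The equivalence between the sum type `Fin q ⊕ StrictIdx q` and `SymIdx q`. -/
def symEquiv (q : ℕ) : (Fin q ⊕ StrictIdx q) ≃ SymIdx q where
  toFun := Sum.elim (fun j => ⟨(j, j), le_refl j⟩) (fun ij => ⟨ij.1, le_of_lt ij.2⟩)
  invFun := fun kl =>
    if h : kl.1.2 < kl.1.1 then Sum.inr ⟨kl.1, h⟩ else Sum.inl kl.1.1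
  left_inv := by
    rintro (j | ij)
    · simp
    · simp [ij.2]
  right_inv := by
    rintro ⟨⟨a, b⟩, hab⟩
    by_cases h : b < a
    · simp [h]
    · have : b = a := le_antisymm hab (not_lt.mp h)
      subst this
      simp

lemma key_lemma {q r : ℕ} (τ : Matrix (SymIdx q) (Fin r) ℝ) (h : Fin q → ℝ)
    (hbin : ∀ i, h i = 0 ∨ h i = 1) :
    τᵀ *ᵥ vech (vecMulVec h h) = (alpha2 τ)ᵀ *ᵥ sstat h := by
  have hsq : ∀ i, h i * h i = h i := by
    intro i; rcases hbin i with hi | hi <;> rw [hi] <;> ring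
  funext k
  simp only [Matrix.mulVec, dotProduct, Matrix.transpose_apply]
  rw [← Fintype.sum_equiv (symEquiv q)
    (fun x => (alpha2 τ) x k * sstat h x)
    (fun kl => τ kl k * vech (vecMulVec h h) kl)]
  rintro (j | ij)
  · simp only [symEquiv, Equiv.coe_fn_mk, Sum.elim_inl, alpha2, sstat, Matrix.of_apply]
    rw [Lmul_apply]
    simp [vech, vecMulVec, hsq j]
  · simp only [symEquiv, Equiv.coe_fn_mk, Sum.elim_inr, alpha2, sstat, Matrix.of_apply]
    rw [Jmul_apply, JmulVec_apply]

/-- sufficiency with only binary predictors. If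
`α₂ᵀ s(h₁) = α₂ᵀ s(h₂)` for binary `h₁, h₂`, then
`P_y(h₁)·P_{y'}(h₂) = P_y(h₂)·P_{y'}(h₁)` for all `y, y'`. -/
theorem statement5 {q r : ℕ} {𝒴 : Type*}
    (τ0 : SymIdx q → ℝ) (τ : Matrix (SymIdx q) (Fin r) ℝ)
    (f : 𝒴 → Fin r → ℝ) (h₁ h₂ : Fin q → ℝ)
    (hbin₁ : ∀ i, h₁ i = 0 ∨ h₁ i = 1) (hbin₂ : ∀ i, h₂ i = 0 ∨ h₂ i = 1)
    (hred : (alpha2 τ)ᵀ *ᵥ sstat h₁ = (alpha2 τ)ᵀ *ᵥ sstat h₂) :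
    ∀ y y' : 𝒴,
      Pising τ0 τ (f y) h₁ * Pising τ0 τ (f y') h₂
        = Pising τ0 τ (f y) h₂ * Pising τ0 τ (f y') h₁ := by
  intro y y'
  have hv : τᵀ *ᵥ vech (vecMulVec h₁ h₁) = τᵀ *ᵥ vech (vecMulVec h₂ h₂) := by
    rw [key_lemma τ h₁ hbin₁, key_lemma τ h₂ hbin₂, hred]
  have hdot : ∀ g : Fin r → ℝ,
      vech (vecMulVec h₁ h₁) ⬝ᵥ (τ *ᵥ g) = vech (vecMulVec h₂ h₂) ⬝ᵥ (τ *ᵥ g) := by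
    intro g
    rw [Matrix.dotProduct_mulVec, Matrix.dotProduct_mulVec,
      ← Matrix.mulVec_transpose, ← Matrix.mulVec_transpose, hv]
  unfold Pising
  rw [div_mul_div_comm, div_mul_div_comm, ← Real.exp_add, ← Real.exp_add]
  have expand : ∀ (v : SymIdx q → ℝ) (g : Fin r → ℝ),
      v ⬝ᵥ (τ0 + τ *ᵥ g) = v ⬝ᵥ τ0 + v ⬝ᵥ (τ *ᵥ g) := fun v g => dotProduct_add v _ _
  congr 2
  rw [expand, expand, expand, expand, hdot (f y), hdot (f y')]
  ring

end Stmt5
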